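/- For every integer k ≥ 0, the matrices A_k^+ and A_k^- are totally unimodular: every square submatrix of A_k^+ has determinant in {-1,0,1}, and likewise for A_k^-. -/

import Mathlib

/-!
By induction on `k`. Up to reindexing, `A_{k+1}^+ = [[A_k^+, I], [A_k^+, 0]]`, whose transpose is
the column-duplicated matrix `[A_k^+ᵀ, A_k^+ᵀ]` with the unit rows `[I, 0]` appended. Duplicating
columns and appending rows with a single nonzero entry `±1` both preserve total unimodularity.
The matrix `A_{k+1}^- = [[A_k^-, 0], [A_k^-, I]]` is the same construction with its two row
blocks swapped.
-/

open scoped Kronecker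

/-- The `2^k × 2^k` discrete Haar basis matrix, defined recursively by `A_0 = [1]` and
`A_k = [[A_{k-1}, I], [A_{k-1}, -I]]`. -/
noncomputable def haar : (k : ℕ) → Matrix (Fin (2 ^ k)) (Fin (2 ^ k)) ℝ
  | 0 => Matrix.of fun _ _ => 1
  | k + 1 =>
      Matrix.reindex
        ((finSumFinEquiv (m := 2 ^ k) (n := 2 ^ k)).trans (finCongr (by rw [pow_succ, mul_two])))
        ((finSumFinEquiv (m := 2 ^ k) (n := 2 ^ k)).trans (finCongr (by rw [pow_succ, mul_two])))
        (Matrix.fromBlocks (haar k) (1 : Matrix (Fin (2 ^ k)) (Fin (2 ^ k)) ℝ)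
          (haar k) (-1 : Matrix (Fin (2 ^ k)) (Fin (2 ^ k)) ℝ))

/-- Indicator matrix of the positive entries of the Haar matrix. -/
noncomputable def haarPos (k : ℕ) : Matrix (Fin (2 ^ k)) (Fin (2 ^ k)) ℝ :=
  Matrix.of fun i j => if 0 < haar k i j then 1 else 0

/-- Indicator matrix of the negative entries of the Haar matrix. -/
noncomputable def haarNeg (k : ℕ) : Matrix (Fin (2 ^ k)) (Fin (2 ^ k)) ℝ :=
  Matrix.of fun i j => if haar k i j < 0 then 1 else 0

open Matrix

namespace Matrix

variable {m n R : Type*} [CommRing R]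

lemma isTotallyUnimodular_zero : (0 : Matrix m n R).IsTotallyUnimodular := by
  rintro (_ | k) f g - -
  · exact ⟨1, by simp⟩
  · exact ⟨0, by simp⟩

lemma isTotallyUnimodular_one [DecidableEq n] : (1 : Matrix n n R).IsTotallyUnimodular :=
  ((fromRows_one_isTotallyUnimodular_iff (0 : Matrix Empty n R)).mpr
    (emptyRows_isTotallyUnimodular _)).submatrix Sum.inr id

lemma IsTotallyUnimodular.fromCols_self {A : Matrix m n R} (hA : A.IsTotallyUnimodular) :
    (fromCols A A).IsTotallyUnimodular := by
  have : fromCols A A = A.submatrix id (Sum.elim id id) := by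
    ext i (j | j) <;> rfl
  exact this ▸ hA.submatrix _ _

lemma IsTotallyUnimodular.fromBlocks_self_one_self_zero [DecidableEq m] {A : Matrix m n R}
    (hA : A.IsTotallyUnimodular) :
    (fromBlocks A (1 : Matrix m m R) A 0).IsTotallyUnimodular := by
  rw [← transpose_isTotallyUnimodular_iff, fromBlocks_transpose, transpose_one, transpose_zero,
    ← fromRows_fromCols_eq_fromBlocks]
  refine hA.transpose.fromCols_self.fromRows_unitlike fun _ i => ⟨Sum.inl i, 1, ?_⟩
  ext (j | j) <;> simp [one_apply, Pi.single_apply, eq_comm]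

lemma IsTotallyUnimodular.fromBlocks_self_zero_self_one [DecidableEq m] {A : Matrix m n R}
    (hA : A.IsTotallyUnimodular) :
    (fromBlocks A 0 A (1 : Matrix m m R)).IsTotallyUnimodular := by
  simpa using hA.fromBlocks_self_one_self_zero.submatrix Sum.swap id

lemma IsTotallyUnimodular.det_submatrix_mem {m' : Type*} [Fintype m'] [DecidableEq m']
    {A : Matrix m n R} (hA : A.IsTotallyUnimodular) (f : m' → m) (g : m' → n) :
    (A.submatrix f g).det ∈ ({-1, 0, 1} : Set R) := by
  have h := (isTotallyUnimodular_iff_fintype A).mp hA m' f g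
  rw [SignType.range_eq] at h
  simpa [or_left_comm] using h

end Matrix

def haarBlockEquiv (k : ℕ) : Fin (2 ^ k) ⊕ Fin (2 ^ k) ≃ Fin (2 ^ (k + 1)) :=
  finSumFinEquiv.trans (finCongr (by rw [pow_succ, mul_two]))

lemma haar_succ (k : ℕ) :
    haar (k + 1) = reindex (haarBlockEquiv k) (haarBlockEquiv k)
      (fromBlocks (haar k) 1 (haar k) (-1)) :=
  rfl

lemma haarPos_zero : haarPos 0 = 1 := by
  ext i j
  obtain rfl : i = j := Subsingleton.elim (α := Fin 1) i j
  simp [haarPos, haar]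

lemma haarNeg_zero : haarNeg 0 = 0 := by
  ext i j
  norm_num [haarNeg, haar]

lemma haarPos_succ (k : ℕ) :
    haarPos (k + 1) = reindex (haarBlockEquiv k) (haarBlockEquiv k)
      (fromBlocks (haarPos k) 1 (haarPos k) 0) := by
  change (haar (k + 1)).map (fun x => if 0 < x then 1 else 0) = _
  rw [haar_succ, reindex_apply, ← submatrix_map, fromBlocks_map]
  congr 2 <;> ext i j <;> by_cases h : i = j <;> simp [one_apply, h]

lemma haarNeg_succ (k : ℕ) :
    haarNeg (k + 1) = reindex (haarBlockEquiv k) (haarBlockEquiv k)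
      (fromBlocks (haarNeg k) 0 (haarNeg k) 1) := by
  change (haar (k + 1)).map (fun x => if x < 0 then 1 else 0) = _
  rw [haar_succ, reindex_apply, ← submatrix_map, fromBlocks_map]
  congr 2 <;> ext i j <;> by_cases h : i = j <;> simp [one_apply, h]

lemma haarPos_isTotallyUnimodular (k : ℕ) : (haarPos k).IsTotallyUnimodular := by
  induction k with
  | zero => exact haarPos_zero ▸ isTotallyUnimodular_one
  | succ k ih => exact haarPos_succ k ▸ ih.fromBlocks_self_one_self_zero.reindex _ _

lemma haarNeg_isTotallyUnimodular (k : ℕ) : (haarNeg k).IsTotallyUnimodular := by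
  induction k with
  | zero => exact haarNeg_zero ▸ isTotallyUnimodular_zero
  | succ k ih => exact haarNeg_succ k ▸ ih.fromBlocks_self_zero_self_one.reindex _ _

/-- For every `k ≥ 0`, the matrices `A_k^+` and `A_k^-` are totally unimodular: every
square submatrix has determinant in `{-1, 0, 1}`. -/
theorem stmt8 (k : ℕ) :
    (∀ (i : ℕ) (r c : Fin i → Fin (2 ^ k)), Function.Injective r → Function.Injective c →
      ((haarPos k).submatrix r c).det ∈ ({-1, 0, 1} : Set ℝ)) ∧
    (∀ (i : ℕ) (r c : Fin i → Fin (2 ^ k)), Function.Injective r → Function.Injective c →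
      ((haarNeg k).submatrix r c).det ∈ ({-1, 0, 1} : Set ℝ)) :=
  ⟨fun _ r c _ _ => (haarPos_isTotallyUnimodular k).det_submatrix_mem r c,
    fun _ r c _ _ => (haarNeg_isTotallyUnimodular k).det_submatrix_mem r c⟩
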